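/- Let X be a conformal Killing vector field on flat ℝⁿ (n ≥ 3) that is affine of the standard conformal Lie algebra type (generated by translations, rotations, dilations and inversions). Then for every ℓ ∈ ℕ, the ℓ-th power of the flat Laplacian satisfies Δ^ℓ ∘ (X + λ Div X) = (X + μ Div X) ∘ Δ^ℓ, where λ = (n−2ℓ)/(2n) and μ = (n+2ℓ)/(2n). Verify this for X a special conformal (inversion-type) generator X = x² ∂_k − 2 x_k x^i ∂_i. -/

import Mathlib

open Finset

/-- Partial derivative `∂ᵢ` of a function on `ℝⁿ`. -/
noncomputable def pd {n : ℕ} (i : Fin n) (f : (Fin n → ℝ) → ℝ) (x : Fin n → ℝ) : ℝ :=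
  fderiv ℝ f x (Pi.single i 1)

/-- The flat Laplacian `Δ = ηⁱʲ∂ᵢ∂ⱼ` for the diagonal metric `η = diag ε`. -/
noncomputable def Lap {n : ℕ} (ε : Fin n → ℝ) (f : (Fin n → ℝ) → ℝ)
    (x : Fin n → ℝ) : ℝ :=
  ∑ i, ε i * pd i (pd i f) x

section API
variable {n : ℕ}

lemma pd_smooth {f : (Fin n → ℝ) → ℝ} (hf : ContDiff ℝ (⊤ : ℕ∞) f) (i : Fin n) :
    ContDiff ℝ (⊤ : ℕ∞) (pd i f) :=
  (hf.fderiv_right (by simp)).clm_apply contDiff_const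

lemma pd_add {f g : (Fin n → ℝ) → ℝ} {x : Fin n → ℝ} (i : Fin n)
    (hf : DifferentiableAt ℝ f x) (hg : DifferentiableAt ℝ g x) :
    pd i (fun y => f y + g y) x = pd i f x + pd i g x := by
  unfold pd; rw [fderiv_fun_add hf hg]; rfl

lemma pd_mul {f g : (Fin n → ℝ) → ℝ} {x : Fin n → ℝ} (i : Fin n)
    (hf : DifferentiableAt ℝ f x) (hg : DifferentiableAt ℝ g x) :
    pd i (fun y => f y * g y) x = pd i f x * g x + f x * pd i g x := by
  unfold pd; rw [fderiv_fun_mul hf hg]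
  simp [ContinuousLinearMap.add_apply]; ring

lemma pd_const_mul {f : (Fin n → ℝ) → ℝ} {x : Fin n → ℝ} (i : Fin n) (c : ℝ)
    (hf : DifferentiableAt ℝ f x) :
    pd i (fun y => c * f y) x = c * pd i f x := by
  unfold pd; rw [fderiv_const_mul hf]; rfl

lemma pd_sum {ι : Type*} (s : Finset ι) {F : ι → (Fin n → ℝ) → ℝ} {x : Fin n → ℝ} (i : Fin n)
    (hF : ∀ j ∈ s, DifferentiableAt ℝ (F j) x) :
    pd i (fun y => ∑ j ∈ s, F j y) x = ∑ j ∈ s, pd i (F j) x := by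
  unfold pd; rw [fderiv_fun_sum hF, ContinuousLinearMap.sum_apply]

lemma pd_coord {x : Fin n → ℝ} (i j : Fin n) :
    pd i (fun y => y j) x = if i = j then 1 else 0 := by
  have : (fun y : Fin n → ℝ => y j) = (ContinuousLinearMap.proj j : (Fin n → ℝ) →L[ℝ] ℝ) := rfl
  unfold pd
  rw [this, ContinuousLinearMap.fderiv]
  simp [Pi.single_apply, eq_comm]

lemma pd_pd_comm {f : (Fin n → ℝ) → ℝ} (hf : ContDiff ℝ (⊤ : ℕ∞) f) (i j : Fin n) (x : Fin n → ℝ) :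
    pd i (pd j f) x = pd j (pd i f) x := by
  have hd : Differentiable ℝ f := hf.differentiable (by simp)
  have hd2 : DifferentiableAt ℝ (fderiv ℝ f) x :=
    ((hf.fderiv_right (m := (⊤ : ℕ∞)) (by simp)).differentiable (by simp)).differentiableAt
  have key : ∀ u v : Fin n → ℝ,
      fderiv ℝ (fun y => fderiv ℝ f y u) x v = fderiv ℝ (fderiv ℝ f) x v u := by
    intro u v
    rw [fderiv_clm_apply hd2 (differentiableAt_const u)]
    simp
  show fderiv ℝ (fun y => fderiv ℝ f y (Pi.single j 1)) x (Pi.single i 1) = _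
  rw [key]
  rw [second_derivative_symmetric (fun y => (hd y).hasFDerivAt) hd2.hasFDerivAt]
  rw [← key]
  rfl

end API

section LapAPI
variable {n : ℕ} {ε : Fin n → ℝ}

lemma dAt {f : (Fin n → ℝ) → ℝ} (hf : ContDiff ℝ (⊤ : ℕ∞) f) (x : Fin n → ℝ) :
    DifferentiableAt ℝ f x := (hf.differentiable (by simp)).differentiableAt

lemma lap_smooth {f : (Fin n → ℝ) → ℝ} (hf : ContDiff ℝ (⊤ : ℕ∞) f) :
    ContDiff ℝ (⊤ : ℕ∞) (Lap ε f) := by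
  unfold Lap
  exact ContDiff.sum fun i _ => contDiff_const.mul (pd_smooth (pd_smooth hf i) i)

lemma pd_add_fun {f g : (Fin n → ℝ) → ℝ} (hf : ContDiff ℝ (⊤ : ℕ∞) f) (hg : ContDiff ℝ (⊤ : ℕ∞) g)
    (i : Fin n) : pd i (fun y => f y + g y) = fun x => pd i f x + pd i g x := by
  funext x; exact pd_add i (dAt hf x) (dAt hg x)

lemma pd_const_mul_fun {f : (Fin n → ℝ) → ℝ} (hf : ContDiff ℝ (⊤ : ℕ∞) f) (c : ℝ)
    (i : Fin n) : pd i (fun y => c * f y) = fun x => c * pd i f x := by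
  funext x; exact pd_const_mul i c (dAt hf x)

lemma lap_add {f g : (Fin n → ℝ) → ℝ} (hf : ContDiff ℝ (⊤ : ℕ∞) f) (hg : ContDiff ℝ (⊤ : ℕ∞) g)
    (x : Fin n → ℝ) :
    Lap ε (fun y => f y + g y) x = Lap ε f x + Lap ε g x := by
  unfold Lap
  rw [← Finset.sum_add_distrib]
  refine Finset.sum_congr rfl fun i _ => ?_
  rw [pd_add_fun hf hg i, pd_add i (dAt (pd_smooth hf i) x) (dAt (pd_smooth hg i) x)]
  ring

lemma lap_const_mul {f : (Fin n → ℝ) → ℝ} (hf : ContDiff ℝ (⊤ : ℕ∞) f) (c : ℝ)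
    (x : Fin n → ℝ) :
    Lap ε (fun y => c * f y) x = c * Lap ε f x := by
  unfold Lap
  rw [Finset.mul_sum]
  refine Finset.sum_congr rfl fun i _ => ?_
  rw [pd_const_mul_fun hf c i, pd_const_mul i c (dAt (pd_smooth hf i) x)]
  ring

lemma pd_lap_comm {f : (Fin n → ℝ) → ℝ} (hf : ContDiff ℝ (⊤ : ℕ∞) f) (i : Fin n)
    (x : Fin n → ℝ) :
    pd i (Lap ε f) x = Lap ε (pd i f) x := by
  unfold Lap
  rw [pd_sum Finset.univ i
    (fun j _ => (contDiff_const.mul (pd_smooth (pd_smooth hf j) j)).differentiable (by simp) |>.differentiableAt)]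
  refine Finset.sum_congr rfl fun j _ => ?_
  rw [pd_const_mul i (ε j) (dAt (pd_smooth (pd_smooth hf j) j) x)]
  congr 1
  have h1 : pd i (pd j (pd j f)) x = pd j (pd i (pd j f)) x :=
    pd_pd_comm (pd_smooth hf j) i j x
  have h2 : pd i (pd j f) = pd j (pd i f) := funext fun y => pd_pd_comm hf i j y
  rw [h1, h2]

lemma lap_mul {f g : (Fin n → ℝ) → ℝ} (hf : ContDiff ℝ (⊤ : ℕ∞) f) (hg : ContDiff ℝ (⊤ : ℕ∞) g)
    (x : Fin n → ℝ) :
    Lap ε (fun y => f y * g y) x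
      = Lap ε f x * g x + 2 * ∑ j, ε j * (pd j f x * pd j g x) + f x * Lap ε g x := by
  unfold Lap
  have key : ∀ j : Fin n, pd j (pd j (fun y => f y * g y)) x
      = pd j (pd j f) x * g x + 2 * (pd j f x * pd j g x) + f x * pd j (pd j g) x := by
    intro j
    have h1 : pd j (fun y => f y * g y) = fun y => pd j f y * g y + f y * pd j g y := by
      funext y; exact pd_mul j (dAt hf y) (dAt hg y)
    rw [h1]
    rw [pd_add j (((pd_smooth hf j).mul hg).differentiable (by simp)).differentiableAt
      ((hf.mul (pd_smooth hg j)).differentiable (by simp)).differentiableAt]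
    rw [pd_mul j (dAt (pd_smooth hf j) x) (dAt hg x),
        pd_mul j (dAt hf x) (dAt (pd_smooth hg j) x)]
    ring
  calc ∑ i, ε i * pd i (pd i (fun y => f y * g y)) x
      = ∑ i, (ε i * pd i (pd i f) x * g x + 2 * (ε i * (pd i f x * pd i g x))
          + f x * (ε i * pd i (pd i g) x)) := by
        refine Finset.sum_congr rfl fun i _ => ?_; rw [key i]; ring
    _ = _ := by
        rw [Finset.sum_add_distrib, Finset.sum_add_distrib, ← Finset.sum_mul,
          ← Finset.mul_sum, ← Finset.mul_sum]

end LapAPI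

section Poly
variable {n : ℕ}

lemma coord_smooth (j : Fin n) : ContDiff ℝ (⊤ : ℕ∞) (fun y : Fin n → ℝ => y j) :=
  (ContinuousLinearMap.proj j : (Fin n → ℝ) →L[ℝ] ℝ).contDiff

lemma pd_sub {f g : (Fin n → ℝ) → ℝ} {x : Fin n → ℝ} (i : Fin n)
    (hf : DifferentiableAt ℝ f x) (hg : DifferentiableAt ℝ g x) :
    pd i (fun y => f y - g y) x = pd i f x - pd i g x := by
  unfold pd; rw [fderiv_fun_sub hf hg]; rfl

/-- The components of the special conformal vector field. -/
def Xc (ε : Fin n → ℝ) (k j : Fin n) : (Fin n → ℝ) → ℝ :=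
  fun w => (∑ m, ε m * w m * w m) * (if j = k then 1 else 0) - 2 * (ε k * w k) * w j

lemma Xc_smooth (ε : Fin n → ℝ) (k j : Fin n) : ContDiff ℝ (⊤ : ℕ∞) (Xc ε k j) := by
  unfold Xc
  exact ((ContDiff.sum fun m _ => (contDiff_const.mul (coord_smooth m)).mul
      (coord_smooth m)).mul contDiff_const).sub
    ((contDiff_const.mul (contDiff_const.mul (coord_smooth k))).mul (coord_smooth j))

lemma pd_Xc (ε : Fin n → ℝ) (k i j : Fin n) (x : Fin n → ℝ) :
    pd i (Xc ε k j) x =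
      2 * ε i * x i * (if j = k then 1 else 0)
        - 2 * ε k * ((if i = k then 1 else 0) * x j + x k * (if i = j then 1 else 0)) := by
  unfold Xc
  have hS : ∀ y : Fin n → ℝ, DifferentiableAt ℝ (fun w : Fin n → ℝ => ∑ m, ε m * w m * w m) y :=
    fun y => dAt (ContDiff.sum fun m _ => (contDiff_const.mul (coord_smooth m)).mul
      (coord_smooth m)) y
  rw [show (fun w : Fin n → ℝ => (∑ m, ε m * w m * w m) * (if j = k then 1 else 0)
      - 2 * (ε k * w k) * w j)
    = fun w : Fin n → ℝ => ((∑ m, ε m * w m * w m) * (if j = k then 1 else 0))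
      - ((2 * ε k) * (w k * w j)) from by funext w; ring]
  rw [pd_sub i ((hS x).mul_const _)
    ((((coord_smooth k).mul (coord_smooth j)).differentiable (by simp)).differentiableAt.const_mul _)]
  have h1 : pd i (fun w : Fin n → ℝ => (∑ m, ε m * w m * w m) * (if j = k then 1 else 0)) x
      = (2 * ε i * x i) * (if j = k then 1 else 0) := by
    rw [show (fun w : Fin n → ℝ => (∑ m, ε m * w m * w m) * (if j = k then 1 else 0))
      = fun w : Fin n → ℝ => (if j = k then (1:ℝ) else 0) * ∑ m, ε m * w m * w m from by
        funext w; ring]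
    rw [pd_const_mul i _ (hS x)]
    rw [pd_sum Finset.univ i (fun m _ => by
      exact dAt ((contDiff_const.mul (coord_smooth m)).mul (coord_smooth m)) x)]
    have : ∀ m : Fin n, pd i (fun w : Fin n → ℝ => ε m * w m * w m) x
        = ε m * ((if i = m then 1 else 0) * x m + x m * (if i = m then 1 else 0)) := by
      intro m
      rw [show (fun w : Fin n → ℝ => ε m * w m * w m)
        = fun w : Fin n → ℝ => ε m * (w m * w m) from by funext w; ring]
      rw [pd_const_mul i _ (dAt ((coord_smooth m).mul (coord_smooth m)) x),
        pd_mul i (dAt (coord_smooth m) x) (dAt (coord_smooth m) x), pd_coord]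
    have h3 : ∀ m : Fin n, ε m * ((if i = m then 1 else 0) * x m + x m * (if i = m then 1 else 0))
        = if i = m then 2 * ε m * x m else 0 := by
      intro m; split_ifs <;> ring
    simp only [this, h3, Finset.sum_ite_eq, Finset.mem_univ, if_true]
    ring
  have h2 : pd i (fun w : Fin n → ℝ => (2 * ε k) * (w k * w j)) x
      = 2 * ε k * ((if i = k then 1 else 0) * x j + x k * (if i = j then 1 else 0)) := by
    rw [pd_const_mul i _ (dAt ((coord_smooth k).mul (coord_smooth j)) x),
      pd_mul i (dAt (coord_smooth k) x) (dAt (coord_smooth j) x), pd_coord, pd_coord]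
  rw [h1, h2]

end Poly

section PolyMore
variable {n : ℕ} {ε : Fin n → ℝ} {k : Fin n}

lemma divX (x : Fin n → ℝ) :
    ∑ i, pd i (Xc ε k i) x = -(2 * n) * (ε k * x k) := by
  have h : ∀ i : Fin n, pd i (Xc ε k i) x =
      2 * ε i * x i * (if i = k then 1 else 0)
        - 2 * ε k * ((if i = k then 1 else 0) * x i + x k * 1) := by
    intro i
    rw [pd_Xc]
    simp
  simp only [h]
  have h2 : ∀ i : Fin n,
      2 * ε i * x i * (if i = k then 1 else 0)
        - 2 * ε k * ((if i = k then 1 else 0) * x i + x k * 1)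
      = (if i = k then (2 * ε k * x k - 2 * ε k * x k) else 0) - 2 * ε k * x k := by
    intro i
    by_cases hik : i = k
    · subst hik; simp; ring
    · simp [hik]
  simp only [h2]
  rw [Finset.sum_sub_distrib]
  simp [Finset.sum_ite_eq, Finset.card_univ]
  ring

lemma pd_pd_Xc (i j : Fin n) (x : Fin n → ℝ) :
    pd i (pd i (Xc ε k j)) x =
      2 * ε i * (if j = k then 1 else 0)
        - 4 * ε k * ((if i = k then 1 else 0) * (if i = j then 1 else 0)) := by
  have hfun : pd i (Xc ε k j) = fun y : Fin n → ℝ =>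
      (2 * ε i * (if j = k then 1 else 0)) * y i
        - ((2 * ε k * (if i = k then 1 else 0)) * y j + (2 * ε k * (if i = j then 1 else 0)) * y k) := by
    funext y; rw [pd_Xc]; ring
  rw [hfun]
  have d1 : ∀ m : Fin n, ∀ c : ℝ, DifferentiableAt ℝ (fun y : Fin n → ℝ => c * y m) x :=
    fun m c => dAt (contDiff_const.mul (coord_smooth m)) x
  rw [pd_sub i (d1 i _) (((d1 j _).fun_add (d1 k _)))]
  rw [pd_add i (d1 j _) (d1 k _)]
  rw [pd_const_mul i _ (dAt (coord_smooth i) x), pd_const_mul i _ (dAt (coord_smooth j) x),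
    pd_const_mul i _ (dAt (coord_smooth k) x), pd_coord, pd_coord, pd_coord]
  simp only [if_pos rfl]
  by_cases h1 : i = k <;> by_cases h2 : i = j <;> simp [h1, h2] <;> split_ifs <;> ring

lemma lap_Xc (hε : ∀ i, ε i = 1 ∨ ε i = -1) (j : Fin n) (x : Fin n → ℝ) :
    Lap ε (Xc ε k j) x = (2 * n - 4) * (if j = k then 1 else 0) := by
  have εsq : ∀ i, ε i * ε i = 1 := fun i => by rcases hε i with h | h <;> rw [h] <;> norm_num
  unfold Lap
  simp only [pd_pd_Xc]
  have h : ∀ i : Fin n,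
      ε i * (2 * ε i * (if j = k then 1 else 0)
        - 4 * ε k * ((if i = k then 1 else 0) * (if i = j then 1 else 0)))
      = 2 * (if j = k then 1 else 0)
        - (if i = k then 4 * (if j = k then 1 else 0) else 0) := by
    intro i
    by_cases h1 : i = k <;> by_cases h2 : i = j
    · have hjk : j = k := by rw [← h2, h1]
      simp [h1, h2, hjk]
      nlinarith [εsq k]
    · have hjk : ¬ j = k := fun hc => h2 (by rw [h1, ← hc])
      simp [h1, h2, hjk]
      intro hc; exact absurd hc.symm hjk
    · have hjk : ¬ j = k := fun hc => h1 (by rw [h2, hc])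
      simp [h1, h2, hjk]
    · simp [h1, h2]
      split_ifs with hf <;> nlinarith [εsq i]
  simp only [h]
  rw [Finset.sum_sub_distrib]
  simp [Finset.sum_ite_eq, Finset.sum_ite_eq', Finset.card_univ]
  split_ifs <;> ring

end PolyMore

section Step
variable {n : ℕ} {ε : Fin n → ℝ} {k : Fin n}

lemma pd_const (i : Fin n) (c : ℝ) (x : Fin n → ℝ) : pd i (fun _ => c) x = 0 := by
  unfold pd; rw [fderiv_fun_const]; rfl

lemma lap_sum {ι : Type*} (s : Finset ι) {F : ι → (Fin n → ℝ) → ℝ}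
    (hF : ∀ j ∈ s, ContDiff ℝ (⊤ : ℕ∞) (F j)) (x : Fin n → ℝ) :
    Lap ε (fun y => ∑ j ∈ s, F j y) x = ∑ j ∈ s, Lap ε (F j) x := by
  unfold Lap
  rw [Finset.sum_comm]
  refine Finset.sum_congr rfl fun i _ => ?_
  rw [show pd i (fun y => ∑ j ∈ s, F j y) = fun z => ∑ j ∈ s, pd i (F j) z from
    funext fun z => pd_sum s i (fun j hj => dAt (hF j hj) z)]
  rw [pd_sum s i (fun j hj => dAt (pd_smooth (hF j hj) i) x), Finset.mul_sum]

lemma lap_coord (j : Fin n) (x : Fin n → ℝ) :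
    Lap ε (fun y => y j) x = 0 := by
  unfold Lap
  refine Finset.sum_eq_zero fun i _ => ?_
  rw [show pd i (fun y : Fin n → ℝ => y j) = fun _ => if i = j then (1:ℝ) else 0 from
    funext fun z => pd_coord i j, pd_const, mul_zero]

lemma step (hε : ∀ i, ε i = 1 ∨ ε i = -1) {g : (Fin n → ℝ) → ℝ}
    (hg : ContDiff ℝ (⊤ : ℕ∞) g) (a : ℝ) (x : Fin n → ℝ) :
    Lap ε (fun y => (∑ i, Xc ε k i y * pd i g y) + a * (ε k * y k) * g y) x
      = (∑ i, Xc ε k i x * pd i (Lap ε g) x) + (a - 4) * (ε k * x k) * Lap ε g x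
        + (2 * n - 4 + 2 * a) * pd k g x := by
  have εsq : ∀ i, ε i * ε i = 1 := fun i => by rcases hε i with h | h <;> rw [h] <;> norm_num
  have hsum : ContDiff ℝ (⊤ : ℕ∞) (fun y => ∑ i, Xc ε k i y * pd i g y) :=
    ContDiff.sum fun i _ => (Xc_smooth ε k i).mul (pd_smooth hg i)
  have hsec : ContDiff ℝ (⊤ : ℕ∞) (fun y : Fin n → ℝ => a * (ε k * y k) * g y) := by
    have : (fun y : Fin n → ℝ => a * (ε k * y k) * g y)
        = fun y => (a * ε k) * ((fun z : Fin n → ℝ => z k * g z) y) := by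
      funext y; ring
    rw [this]
    exact contDiff_const.mul ((coord_smooth k).mul hg)
  rw [lap_add hsum hsec]
  -- second part
  have part2 : Lap ε (fun y : Fin n → ℝ => a * (ε k * y k) * g y) x
      = 2 * a * pd k g x + a * (ε k * x k) * Lap ε g x := by
    rw [show (fun y : Fin n → ℝ => a * (ε k * y k) * g y)
        = fun y => (a * ε k) * ((fun z : Fin n → ℝ => z k) y * g y) from by funext y; ring]
    rw [lap_const_mul ((coord_smooth k).mul hg)]
    rw [lap_mul (coord_smooth k) hg]
    rw [lap_coord]
    have hpdc : ∀ j : Fin n, pd j (fun z : Fin n → ℝ => z k) x = if j = k then 1 else 0 :=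
      fun j => pd_coord j k
    simp only [hpdc]
    have hs : ∑ j, ε j * ((if j = k then (1:ℝ) else 0) * pd j g x)
        = ε k * pd k g x := by
      rw [Finset.sum_eq_single k]
      · simp
      · intro b _ hb; simp [hb]
      · intro hb; exact absurd (Finset.mem_univ k) hb
    rw [hs]
    linear_combination (2 * a * pd k g x) * εsq k
  rw [part2]
  -- first part
  have part1 : Lap ε (fun y => ∑ i, Xc ε k i y * pd i g y) x
      = (2 * n - 4) * pd k g x + (∑ i, Xc ε k i x * pd i (Lap ε g) x)
        - 4 * (ε k * x k) * Lap ε g x := by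
    rw [lap_sum Finset.univ (fun i _ => (Xc_smooth ε k i).mul (pd_smooth hg i))]
    have hterm : ∀ i : Fin n, Lap ε (fun y => Xc ε k i y * pd i g y) x
        = (2 * n - 4) * (if i = k then 1 else 0) * pd i g x
          + 2 * (∑ j, ε j * (pd j (Xc ε k i) x * pd j (pd i g) x))
          + Xc ε k i x * pd i (Lap ε g) x := by
      intro i
      rw [lap_mul (Xc_smooth ε k i) (pd_smooth hg i), lap_Xc hε, pd_lap_comm hg i x]
    simp only [hterm]
    rw [Finset.sum_add_distrib, Finset.sum_add_distrib]
    have e1 : ∑ i, (2 * (n:ℝ) - 4) * (if i = k then (1:ℝ) else 0) * pd i g x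
        = (2 * n - 4) * pd k g x := by
      rw [Finset.sum_eq_single k]
      · simp
      · intro b _ hb; simp [hb]
      · intro hb; exact absurd (Finset.mem_univ k) hb
    have e2 : ∑ i, 2 * (∑ j, ε j * (pd j (Xc ε k i) x * pd j (pd i g) x))
        = -(4 * (ε k * x k) * Lap ε g x) := by
      have inner : ∀ i : Fin n, 2 * (∑ j, ε j * (pd j (Xc ε k i) x * pd j (pd i g) x))
          = (if i = k then 1 else 0) * (∑ j, 4 * (x j * pd j (pd i g) x))
            - 4 * x i * pd k (pd i g) x
            - 4 * (ε k * x k) * (ε i * pd i (pd i g) x) := by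
        intro i
        have hj : ∀ j : Fin n, 2 * (ε j * (pd j (Xc ε k i) x * pd j (pd i g) x))
            = (if i = k then 1 else 0) * (4 * (x j * pd j (pd i g) x))
              - (if j = k then 4 * x i * pd k (pd i g) x else 0)
              - (if j = i then 4 * (ε k * x k) * (ε i * pd i (pd i g) x) else 0) := by
          intro j
          rw [pd_Xc]
          rcases hε j with hj1 | hj1 <;> rcases hε k with hk1 | hk1 <;>
            rcases hε i with hi1 | hi1 <;> rw [hj1, hk1, hi1] <;>
            by_cases h1 : j = k <;> by_cases h2 : j = i <;> by_cases h3 : i = k <;>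
            first
              | exact absurd (h2.symm.trans h1) h3
              | exact absurd (h1.trans h3.symm) h2
              | exact absurd (h2.trans h3) h1
              | (simp only [h1, h2, h3, eq_self_iff_true, if_true, if_false] <;>
                  (try split_ifs) <;>
                  first
                    | ring1
                    | (exfalso; subst_vars;
                       (first
                         | exact absurd rfl (by assumption)
                         | linarith)))
        rw [Finset.mul_sum]
        rw [Finset.sum_congr rfl fun j _ => hj j]
        rw [Finset.sum_sub_distrib, Finset.sum_sub_distrib]
        rw [Finset.sum_ite_eq' Finset.univ k
          (fun _ => 4 * x i * pd k (pd i g) x)]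
        rw [Finset.sum_ite_eq' Finset.univ i
          (fun _ => 4 * (ε k * x k) * (ε i * pd i (pd i g) x))]
        rw [← Finset.mul_sum]
        simp
      rw [Finset.sum_congr rfl fun i _ => inner i]
      rw [Finset.sum_sub_distrib, Finset.sum_sub_distrib]
      have t1 : ∑ i, (if i = k then (1:ℝ) else 0) * (∑ j, 4 * (x j * pd j (pd i g) x))
          = ∑ j, 4 * (x j * pd j (pd k g) x) := by
        rw [Finset.sum_eq_single k]
        · simp
        · intro b _ hb; simp [hb]
        · intro hb; exact absurd (Finset.mem_univ k) hb
      have t2 : ∑ j, 4 * (x j * pd j (pd k g) x) = ∑ i, 4 * x i * pd k (pd i g) x := by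
        refine Finset.sum_congr rfl fun j _ => ?_
        rw [pd_pd_comm hg j k x]
        ring
      have t3 : ∑ i, 4 * (ε k * x k) * (ε i * pd i (pd i g) x)
          = 4 * (ε k * x k) * Lap ε g x := by
        unfold Lap
        rw [Finset.mul_sum]
      rw [t1, t2, t3]
      ring
    rw [e1, e2]
    ring
  rw [part1]
  ring

end Step


/-- For the special conformal (inversion-type) generator
`X = x² ∂_k − 2 x_k xⁱ ∂ᵢ` on flat `ℝⁿ` and every `ℓ ∈ ℕ`:
`Δ^ℓ ∘ (X + λ Div X) = (X + μ Div X) ∘ Δ^ℓ` with `λ = (n−2ℓ)/(2n)`, `μ = (n+2ℓ)/(2n)`. -/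
theorem laplacian_power_special_conformal_symmetry (n : ℕ) (hn : 3 ≤ n)
    (ε : Fin n → ℝ) (hε : ∀ i, ε i = 1 ∨ ε i = -1)
    (k : Fin n)
    (X : (Fin n → ℝ) → (Fin n → ℝ))
    (hXdef : X = fun x i =>
      (∑ j, ε j * x j * x j) * (if i = k then 1 else 0) - 2 * (ε k * x k) * x i)
    (ℓ : ℕ) (lam mu : ℝ)
    (hlam : lam = ((n : ℝ) - 2 * ℓ) / (2 * n)) (hmu : mu = ((n : ℝ) + 2 * ℓ) / (2 * n)) :
    ∀ f : (Fin n → ℝ) → ℝ, ContDiff ℝ (⊤ : ℕ∞) f → ∀ x : Fin n → ℝ,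
      (Lap ε)^[ℓ] (fun y =>
          (∑ i, X y i * pd i f y) + lam * (∑ i, pd i (fun w => X w i) y) * f y) x =
        (∑ i, X x i * pd i ((Lap ε)^[ℓ] f) x) +
          mu * (∑ i, pd i (fun w => X w i) x) * (Lap ε)^[ℓ] f x := by
  intro f hf x
  have hn0 : (n : ℝ) ≠ 0 := by positivity
  have hX : ∀ (y : Fin n → ℝ) (i : Fin n), X y i = Xc ε k i y := by
    subst hXdef; intro y i; rfl
  have hXf : ∀ i : Fin n, (fun w => X w i) = Xc ε k i := fun i => funext fun w => hX w i
  simp only [hX, hXf]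
  -- smoothness of iterates
  have hgm : ∀ m : ℕ, ContDiff ℝ (⊤ : ℕ∞) ((Lap ε)^[m] f) := by
    intro m
    induction m with
    | zero => exact hf
    | succ m ih => rw [Function.iterate_succ_apply']; exact lap_smooth ih
  -- canonical form of the initial function
  have hF : (fun y => (∑ i, Xc ε k i y * pd i f y) + lam * (∑ i, pd i (Xc ε k i) y) * f y)
      = fun y => (∑ i, Xc ε k i y * pd i f y) + (2 * (ℓ:ℝ) - n) * (ε k * y k) * f y := by
    funext y
    rw [divX y, hlam]
    field_simp
    ring
  rw [hF]
  -- the main induction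
  have aux : ∀ m : ℕ, ∀ z : Fin n → ℝ,
      (Lap ε)^[m] (fun y => (∑ i, Xc ε k i y * pd i f y)
          + (2 * (ℓ:ℝ) - n) * (ε k * y k) * f y) z
        = (∑ i, Xc ε k i z * pd i ((Lap ε)^[m] f) z)
          + (2 * (ℓ:ℝ) - n - 4 * m) * (ε k * z k) * ((Lap ε)^[m] f) z
          + (4 * (m:ℝ) * ((ℓ:ℝ) - m)) * pd k ((Lap ε)^[m - 1] f) z := by
    intro m
    induction m with
    | zero =>
      intro z
      simp only [Function.iterate_zero, id_eq, Nat.cast_zero, Nat.zero_sub]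
      ring
    | succ m ih =>
      intro z
      rw [Function.iterate_succ_apply']
      have hfun : (Lap ε)^[m] (fun y => (∑ i, Xc ε k i y * pd i f y)
          + (2 * (ℓ:ℝ) - n) * (ε k * y k) * f y)
          = fun y => ((∑ i, Xc ε k i y * pd i ((Lap ε)^[m] f) y)
            + (2 * (ℓ:ℝ) - n - 4 * m) * (ε k * y k) * ((Lap ε)^[m] f) y)
            + (4 * (m:ℝ) * ((ℓ:ℝ) - m)) * pd k ((Lap ε)^[m - 1] f) y := funext fun y => ih y
    
      rw [hfun]
      have hAB : ContDiff ℝ (⊤ : ℕ∞) (fun y => (∑ i, Xc ε k i y * pd i ((Lap ε)^[m] f) y)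
          + (2 * (ℓ:ℝ) - n - 4 * m) * (ε k * y k) * ((Lap ε)^[m] f) y) :=
        (ContDiff.sum fun i _ => (Xc_smooth ε k i).mul (pd_smooth (hgm m) i)).add
          ((contDiff_const.mul (contDiff_const.mul (coord_smooth k))).mul (hgm m))
      have hC : ContDiff ℝ (⊤ : ℕ∞) (fun y =>
          (4 * (m:ℝ) * ((ℓ:ℝ) - m)) * pd k ((Lap ε)^[m - 1] f) y) :=
        contDiff_const.mul (pd_smooth (hgm (m - 1)) k)
      have hsplit : Lap ε (fun y => ((∑ i, Xc ε k i y * pd i ((Lap ε)^[m] f) y)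
            + (2 * (ℓ:ℝ) - n - 4 * m) * (ε k * y k) * ((Lap ε)^[m] f) y)
            + (4 * (m:ℝ) * ((ℓ:ℝ) - m)) * pd k ((Lap ε)^[m - 1] f) y) z
          = Lap ε (fun y => (∑ i, Xc ε k i y * pd i ((Lap ε)^[m] f) y)
            + (2 * (ℓ:ℝ) - n - 4 * m) * (ε k * y k) * ((Lap ε)^[m] f) y) z
            + Lap ε (fun y =>
              (4 * (m:ℝ) * ((ℓ:ℝ) - m)) * pd k ((Lap ε)^[m - 1] f) y) z :=
        lap_add hAB hC z
      rw [hsplit]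
      rw [step hε (hgm m) (2 * (ℓ:ℝ) - n - 4 * m) z]
      rw [lap_const_mul (pd_smooth (hgm (m - 1)) k) (4 * (m:ℝ) * ((ℓ:ℝ) - m)) z]
      rw [← pd_lap_comm (hgm (m - 1)) k z]
      -- now distinguish m = 0 and m ≥ 1
      cases m with
      | zero =>
        simp only [Nat.zero_sub, Function.iterate_zero, id_eq, Nat.cast_zero, Nat.cast_one,
          Nat.sub_self, Function.iterate_one]
        rw [show (Lap ε)^[0+1] f = Lap ε f from by rw [Function.iterate_succ_apply']; rfl]
        push_cast
        ring
      | succ m' =>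
        rw [show (Nat.succ m') - 1 = m' from rfl]
        rw [show Lap ε ((Lap ε)^[m'] f) = (Lap ε)^[m' + 1] f from
          (Function.iterate_succ_apply' (Lap ε) m' f).symm]
        rw [show (m' + 1 + 1 : ℕ) - 1 = m' + 1 from rfl]
        rw [show (Lap ε)^[m'+1+1] f = Lap ε ((Lap ε)^[m'+1] f) from
          Function.iterate_succ_apply' (Lap ε) (m'+1) f]
        push_cast
        ring
  rw [aux ℓ x, divX x, hmu]
  have : (4 * (ℓ:ℝ) * ((ℓ:ℝ) - ℓ)) = 0 := by ring
  rw [this, zero_mul, add_zero]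
  field_simp
  ring
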